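/- arXiv:1809.00274 — 9 statements merged into one kernel-verified Lean document; each statement's English description precedes it below -/
import Mathlib

section
/- Let R be a subset of a commutative ring, let a = (a₁,…,a_k) ∈ R^k (k ≥ 2) be a λ′-quiddity cycle and let b = (b₁,…,b_l) ∈ R^l (l ≥ 2) be any finite sequence, with λ′, λ″ ∈ {±1}. Then b is a λ″-quiddity cycle if and only if a ⊕ b is a (−λ′λ″)-quiddity cycle. -/
open Matrix

/-- The 2×2 matrix `[[x, -1], [1, 0]]` associated to an entry of a quiddity cycle. -/
def qMat {R : Type*} [CommRing R] (x : R) : Matrix (Fin 2) (Fin 2) R := !![x, -1; 1, 0]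

/-- `c` is a `lam`-quiddity cycle: the product `∏ [[cₜ,−1],[1,0]]` equals `lam • Id`. -/
def IsQC {R : Type*} [CommRing R] (lam : R) (c : List R) : Prop :=
  (c.map qMat).prod = lam • (1 : Matrix (Fin 2) (Fin 2) R)

/-- `a ⊕ b = (a₁+b_l, a₂, …, a_{k−1}, a_k+b₁, b₂, …, b_{l−1})`. -/
def oplus {R : Type*} [CommRing R] (a b : List R) : List R :=
  (a.head?.getD 0 + b.getLast?.getD 0) ::
    ((a.drop 1).dropLast ++ (a.getLast?.getD 0 + b.head?.getD 0) :: (b.drop 1).dropLast)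

/-- Dihedral equivalence: `a` is a cyclic rotation of `b` or of the reversal of `b`,
i.e. `a = b^σ` for some `σ` in the dihedral group acting on `n` points. -/
def DihEquiv {α : Type*} (a b : List α) : Prop :=
  ∃ i : ℕ, a = b.rotate i ∨ a = b.reverse.rotate i

/-- The action of a dihedral group element, encoded by a rotation amount and a reversal flag. -/
def applyDih {α : Type*} (p : ℕ × Bool) (c : List α) : List α :=
  if p.2 then c.reverse.rotate p.1 else c.rotate p.1


lemma qZ_sq {R : Type*} [CommRing R] : qMat (0:R) * qMat 0 = -1 := by
  ext i j
  fin_cases i <;> fin_cases j <;>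
    simp [qMat, Matrix.mul_apply, Fin.sum_univ_two]

lemma qMat_add {R : Type*} [CommRing R] (x y : R) :
    qMat x * qMat 0 * qMat y = -qMat (x + y) := by
  ext i j
  fin_cases i <;> fin_cases j <;>
    simp [qMat, Matrix.mul_apply, Fin.sum_univ_two]

def qInvM {R : Type*} [CommRing R] (x : R) : Matrix (Fin 2) (Fin 2) R := !![0, 1; -1, x]

lemma qMat_mul_inv {R : Type*} [CommRing R] (x : R) : qMat x * qInvM x = 1 := by
  ext i j
  fin_cases i <;> fin_cases j <;>
    simp [qMat, qInvM, Matrix.mul_apply, Fin.sum_univ_two, Matrix.one_apply]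

lemma qInv_mul_qMat {R : Type*} [CommRing R] (x : R) : qInvM x * qMat x = 1 := by
  ext i j
  fin_cases i <;> fin_cases j <;>
    simp [qMat, qInvM, Matrix.mul_apply, Fin.sum_univ_two, Matrix.one_apply]

/-- If `a` is a `λ'`-quiddity cycle of length `k ≥ 2` and `b` is any finite sequence of
length `l ≥ 2`, then `b` is a `λ''`-quiddity cycle iff `a ⊕ b` is a `(−λ'λ'')`-quiddity cycle. -/
theorem stmt1 {R : Type*} [CommRing R] (lam' lam'' : R)
    (h' : lam' = 1 ∨ lam' = -1) (h'' : lam'' = 1 ∨ lam'' = -1)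
    (a b : List R) (ha : 2 ≤ a.length) (hb : 2 ≤ b.length)
    (hqa : IsQC lam' a) :
    IsQC lam'' b ↔ IsQC (-(lam' * lam'')) (oplus a b) := by
  obtain ⟨x, t, rfl⟩ := List.exists_cons_of_ne_nil (l := a) (by rintro rfl; simp at ha)
  rcases t.eq_nil_or_concat with rfl | ⟨m, y, rfl⟩
  · simp at ha
  obtain ⟨u, s, rfl⟩ := List.exists_cons_of_ne_nil (l := b) (by rintro rfl; simp at hb)
  rcases s.eq_nil_or_concat with rfl | ⟨n, v, rfl⟩
  · simp at hb
  simp only [List.concat_eq_append] at hqa ⊢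
  have hop : oplus (x :: (m ++ [y])) (u :: (n ++ [v])) = (x + v) :: (m ++ (y + u) :: n) := by
    have g1 : ∀ (c : R) (L : List R) (d : R), (c :: (L ++ [d])).getLast? = some d :=
      fun c L d => by rw [show c :: (L ++ [d]) = (c :: L) ++ [d] from rfl, List.getLast?_concat]
    simp [oplus, g1]
  rw [hop]
  simp only [IsQC, List.map_cons, List.map_append, List.prod_cons, List.prod_append,
    List.map_nil, List.prod_nil, mul_one] at hqa ⊢
  set A := (m.map qMat).prod with hA
  set B := (n.map qMat).prod with hB
  have e1 : qMat (x + v) = -(qMat v * qMat 0 * qMat x) := by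
    rw [qMat_add, add_comm, neg_neg]
  have e2 : qMat (y + u) = -(qMat y * qMat 0 * qMat u) := by
    rw [qMat_add, neg_neg]
  have hP : qMat (x + v) * (A * (qMat (y + u) * B))
      = (-lam') • (qMat v * (qMat u * B)) := by
    rw [e1, e2]
    have h3 : -(qMat v * qMat 0 * qMat x) * (A * (-(qMat y * qMat 0 * qMat u) * B))
        = qMat v * qMat 0 * (qMat x * (A * qMat y)) * (qMat 0 * (qMat u * B)) := by
      noncomm_ring
    rw [h3, hqa]
    rw [mul_smul_comm, smul_mul_assoc]
    have h4 : qMat v * qMat 0 * 1 * (qMat 0 * (qMat u * B))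
        = qMat v * (qMat 0 * qMat 0) * (qMat u * B) := by noncomm_ring
    rw [h4, qZ_sq]
    rw [neg_smul, ← smul_neg]
    congr 1
    noncomm_ring
  rw [hP]
  have hsq : lam' * lam' = 1 := by rcases h' with rfl | rfl <;> ring
  constructor
  · intro h
    have hc : qMat v * (qMat u * B) = lam'' • 1 := by
      calc qMat v * (qMat u * B)
          = qMat v * (qMat u * (B * qMat v)) * qInvM v := by
            rw [mul_assoc, mul_assoc, mul_assoc, qMat_mul_inv, mul_one]
        _ = lam'' • 1 := by
            rw [h, mul_smul_comm, mul_one, smul_mul_assoc, qMat_mul_inv]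
    rw [hc, smul_smul]
    congr 1
    ring
  · intro h
    have hc : qMat v * (qMat u * B) = lam'' • 1 := by
      have := congrArg (fun M => (-lam') • M) h
      simp only [smul_smul] at this
      rw [show -lam' * -lam' = 1 from by rw [neg_mul_neg, hsq], one_smul] at this
      rw [this]
      congr 1
      rw [show -lam' * -(lam' * lam'') = lam' * lam' * lam'' from by ring, hsq, one_mul]
    have : qMat u * (B * qMat v) = qInvM v * (qMat v * (qMat u * B)) * qMat v := by
      rw [← mul_assoc (qInvM v), qInv_mul_qMat, one_mul]
      noncomm_ring
    rw [this, hc, mul_smul_comm, mul_one, smul_mul_assoc, qInv_mul_qMat]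
end

section
/- Let R be a subset of a commutative ring, let a = (a₁,…,a_k) be a λ-quiddity cycle and b = (b₁,…,b_l) a λ′-quiddity cycle over R, with k, l ≥ 2. Let ã = (a_k,…,a₁) and b̃ = (b_l,…,b₁) denote the reversed tuples. Then a ⊕ b ∼ ã ⊕ b̃, i.e. ã ⊕ b̃ is obtained from a ⊕ b by an element of the dihedral group D_{k+l−2}. -/
open Matrix

lemma decomp2 {α : Type*} (a : List α) (ha : 2 ≤ a.length) :
    ∃ x s y, a = x :: (s ++ [y]) := by
  match a, ha with
  | x :: (z :: t), _ =>
    refine ⟨x, (z :: t).dropLast, (z :: t).getLast (by simp), ?_⟩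
    simp [List.dropLast_append_getLast]

lemma gl2 {α : Type*} (c z : α) (l : List α) : (c :: (l ++ [z])).getLast? = some z := by
  rw [show c :: (l ++ [z]) = (c :: l) ++ [z] by simp, List.getLast?_concat]

/-- For a `λ`-quiddity cycle `a` and a `λ'`-quiddity cycle `b` (lengths `≥ 2`),
`a ⊕ b` is dihedrally equivalent to `ã ⊕ b̃`, where `ã`, `b̃` are the reversed tuples. -/
theorem stmt2 {R : Type*} [CommRing R] (lam lam' : R)
    (h : lam = 1 ∨ lam = -1) (h' : lam' = 1 ∨ lam' = -1)
    (a b : List R) (ha : 2 ≤ a.length) (hb : 2 ≤ b.length)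
    (hqa : IsQC lam a) (hqb : IsQC lam' b) :
    DihEquiv (oplus a b) (oplus a.reverse b.reverse) := by
  obtain ⟨x, s, y, rfl⟩ := decomp2 a ha
  obtain ⟨u, t, v, rfl⟩ := decomp2 b hb
  refine ⟨t.length, Or.inr ?_⟩
  have h1 : oplus (x :: (s ++ [y])) (u :: (t ++ [v])) = (x + v) :: (s ++ (y + u) :: t) := by
    simp [oplus, gl2]
  have h2 : oplus (x :: (s ++ [y])).reverse (u :: (t ++ [v])).reverse
      = (y + u) :: (s.reverse ++ (x + v) :: t.reverse) := by
    simp [oplus, gl2]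
  rw [h1, h2]
  have : ((y + u) :: (s.reverse ++ (x + v) :: t.reverse)).reverse
      = t ++ ((x + v) :: (s ++ [y + u])) := by
    simp
  rw [this, List.rotate_append_length_eq]
  simp
end

section
/- Let R be a subset of a commutative ring, let k, l > 2, let a = (a₁,…,a_k) ∈ R^k be a λ-quiddity cycle and b = (b₁,…,b_l) ∈ R^l a λ′-quiddity cycle. Then a ⊕ b ∼ b ⊕ a; more precisely, a ⊕ b is a cyclic rotation of b ⊕ a, namely a ⊕ b = (b ⊕ a)^σ where σ sends (1,…,k+l−2) to (l,…,k+l−2,1,…,l−1). -/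
open Matrix

/-- For quiddity cycles `a`, `b` of lengths `k, l > 2`, one has `a ⊕ b ∼ b ⊕ a`;
more precisely `a ⊕ b` is the cyclic rotation of `b ⊕ a` by the permutation sending
`(1,…,k+l−2)` to `(l,…,k+l−2,1,…,l−1)`, i.e. the left rotation by `l − 1`. -/
theorem stmt3 {R : Type*} [CommRing R] (lam lam' : R)
    (h : lam = 1 ∨ lam = -1) (h' : lam' = 1 ∨ lam' = -1)
    (a b : List R) (ha : 2 < a.length) (hb : 2 < b.length)
    (hqa : IsQC lam a) (hqb : IsQC lam' b) :
    oplus a b = (oplus b a).rotate (b.length - 1) ∧ DihEquiv (oplus a b) (oplus b a) := by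
  have key : oplus a b = (oplus b a).rotate (b.length - 1) := by
    have hform : oplus b a =
        ((b.head?.getD 0 + a.getLast?.getD 0) :: (b.drop 1).dropLast) ++
        ((b.getLast?.getD 0 + a.head?.getD 0) :: (a.drop 1).dropLast) := by
      simp [oplus]
    have hlen : ((b.head?.getD 0 + a.getLast?.getD 0) :: (b.drop 1).dropLast).length
        = b.length - 1 := by
      simp [List.length_dropLast, List.length_drop]; omega
    rw [hform, ← hlen, List.rotate_append_length_eq]
    simp [oplus, add_comm]
  exact ⟨key, ⟨b.length - 1, Or.inl key⟩⟩
end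

section
/- Let R be a subset of a commutative ring, let k, l, m > 2, let a ∈ R^k be a λ-quiddity cycle, b = (b₁,…,b_l) ∈ R^l a λ′-quiddity cycle and c ∈ R^m a λ″-quiddity cycle. Then (a ⊕ b) ⊕ c = a ⊕ (b^τ ⊕ c)^σ, where τ ∈ D_l is the cyclic rotation sending (1,…,l) to (l,1,…,l−1) (so b^τ = (b_l, b₁,…,b_{l−1})) and σ ∈ D_{l+m−2} is the cyclic rotation sending (1,…,l+m−2) to (2,…,l+m−2,1). -/
open Matrix

lemma decomp2_s4 {α} (L : List α) (h : 2 ≤ L.length) : ∃ x m y, L = x :: m ++ [y] := by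
  match L, h with
  | x :: rest, h =>
    have hr : rest ≠ [] := by rintro rfl; simp at h
    exact ⟨x, rest.dropLast, rest.getLast hr, by simp [List.dropLast_append_getLast hr]⟩

lemma decomp3 {α} (L : List α) (h : 3 ≤ L.length) : ∃ x m y z, L = x :: m ++ [y, z] := by
  obtain ⟨x, m, z, rfl⟩ := decomp2_s4 L (by omega)
  rcases m.eq_nil_or_concat with rfl | ⟨m', y, rfl⟩
  · simp at h
  · exact ⟨x, m', y, z, by simp⟩

lemma oplus_eq {R : Type*} [CommRing R] (x w u v : R) (ma mc : List R) :
    oplus (x :: ma ++ [w]) (u :: mc ++ [v]) = (x + v) :: ma ++ (w + u) :: mc := by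
  simp only [oplus, ← List.cons_append, List.getLast?_concat, List.head?_cons,
    Option.getD_some, List.drop_succ_cons, List.drop_zero, List.dropLast_concat]
  simp

/-- For quiddity cycles `a`, `b`, `c` of lengths `k, l, m > 2`:
`(a ⊕ b) ⊕ c = a ⊕ (b^τ ⊕ c)^σ`, where `b^τ = (b_l, b₁, …, b_{l−1})` (rotation by `l−1`)
and `σ` is the cyclic rotation sending `(1,…,l+m−2)` to `(2,…,l+m−2,1)` (rotation by `1`). -/
theorem stmt4 {R : Type*} [CommRing R] (lam lam' lam'' : R)
    (h : lam = 1 ∨ lam = -1) (h' : lam' = 1 ∨ lam' = -1) (h'' : lam'' = 1 ∨ lam'' = -1)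
    (a b c : List R) (ha : 2 < a.length) (hb : 2 < b.length) (hc : 2 < c.length)
    (hqa : IsQC lam a) (hqb : IsQC lam' b) (hqc : IsQC lam'' c) :
    oplus (oplus a b) c = oplus a ((oplus (b.rotate (b.length - 1)) c).rotate 1) := by
  obtain ⟨x, ma, w, rfl⟩ := decomp2_s4 a (by omega)
  obtain ⟨p, mb, y, z, rfl⟩ := decomp3 b (by omega)
  obtain ⟨u, mc, v, rfl⟩ := decomp2_s4 c (by omega)
  have hrot : (p :: mb ++ [y, z]).rotate ((p :: mb ++ [y, z]).length - 1)
      = z :: (p :: mb) ++ [y] := by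
    rw [List.rotate_eq_drop_append_take (by simp)]
    simp [List.length, List.take_append]
  have hr1 : ∀ (d : R) (t : List R), (d :: t).rotate 1 = t ++ [d] := by
    intro d t
    have := List.rotate_cons_succ t d 0
    simpa using this
  rw [hrot, oplus_eq, show ((z+v) :: (p :: mb) ++ (y+u) :: mc)
      = (z+v) :: ((p :: mb) ++ (y+u) :: mc) from rfl, hr1]
  have h2 : oplus (x :: ma ++ [w]) ((p :: mb ++ (y + u) :: mc) ++ [z + v])
      = (x + (z + v)) :: ma ++ (w + p) :: (mb ++ (y + u) :: mc) := by
    rw [show (p :: mb ++ (y + u) :: mc) ++ [z + v] = p :: (mb ++ (y+u) :: mc) ++ [z+v] from rfl,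
      oplus_eq]
  rw [show (p :: mb) ++ (y + u) :: mc ++ [z + v] = (p :: mb ++ (y + u) :: mc) ++ [z + v] by simp, h2]
  have h3 : oplus ((x + z) :: ma ++ (w + p) :: (mb ++ [y])) (u :: mc ++ [v])
      = (x + z + v) :: (ma ++ (w+p) :: mb) ++ (y + u) :: mc := by
    rw [show (x + z) :: ma ++ (w + p) :: (mb ++ [y]) = (x+z) :: (ma ++ (w+p) :: mb) ++ [y] by simp,
      oplus_eq]
  rw [show p :: mb ++ [y, z] = p :: (mb ++ [y]) ++ [z] by simp, oplus_eq, h3]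
  simp [add_assoc]
end

section
/- Let R be a subset of a commutative ring, let k > 2, and let a = (a₁,…,a_k) ∈ R^k and b = (b₁,…,b_k) ∈ R^k both be λ-quiddity cycles for the same λ ∈ {±1}. If a ⊕ b = b ⊕ a (equality of tuples), then a = b. -/
/-!
The matrices `qMat x` have determinant `1`, so the product `P` of the middle entries
`a₂, …, a_{k-1}` is invertible. Rotating the cycle, `P * qMat a_k * qMat a₁ = λ • 1`, hence
`qMat a_k * qMat a₁ = λ • P⁻¹` is fixed by the middle entries, and it displays `a₁` and `a_k`
among its entries. Comparing `a ⊕ b` with `b ⊕ a` after their first entry shows that `a` and `b`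
have the same middle entries, so they coincide.
-/

open Matrix

section

variable {R : Type*} [CommRing R]

lemma det_qMat (x : R) : (qMat x).det = 1 := by
  simp [qMat, det_fin_two_of]

lemma isUnit_qMat (x : R) : IsUnit (qMat x) := by
  simp [isUnit_iff_isUnit_det, det_qMat]

lemma isUnit_prod_map_qMat (l : List R) : IsUnit (l.map qMat).prod :=
  List.prod_isUnit fun _ hM => by
    obtain ⟨x, -, rfl⟩ := List.mem_map.mp hM
    exact isUnit_qMat x

lemma eq_and_eq_of_qMat_mul_qMat_eq {u v u' v' : R}
    (h : qMat v * qMat u = qMat v' * qMat u') : u = u' ∧ v = v' := by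
  exact ⟨by simpa [qMat] using congrFun (congrFun h 1) 0,
    by simpa [qMat] using congrFun (congrFun h 0) 1⟩

lemma IsQC.append_singleton_of_cons {lam x : R} {l : List R} (h : IsQC lam (x :: l)) :
    IsQC lam (l ++ [x]) := by
  unfold IsQC at h ⊢
  rw [List.map_cons, List.prod_cons] at h
  rw [List.map_append, List.prod_append, List.map_singleton, List.prod_singleton]
  apply (isUnit_qMat x).mul_left_cancel
  rw [← mul_assoc, h, smul_mul_assoc, mul_smul_comm, one_mul, mul_one]

lemma IsQC.eq_and_eq_of_cons_append {lam u v u' v' : R} {m : List R}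
    (h : IsQC lam (u :: (m ++ [v]))) (h' : IsQC lam (u' :: (m ++ [v']))) :
    u = u' ∧ v = v' := by
  have rotated : ∀ {x y : R}, IsQC lam (x :: (m ++ [y])) →
      (m.map qMat).prod * (qMat y * qMat x) = lam • 1 := fun hxy => by
    have := hxy.append_singleton_of_cons
    simpa only [IsQC, List.map_append, List.prod_append, List.map_cons, List.map_nil,
      List.prod_cons, List.prod_nil, mul_one, mul_assoc] using this
  exact eq_and_eq_of_qMat_mul_qMat_eq <|
    (isUnit_prod_map_qMat m).mul_left_cancel ((rotated h).trans (rotated h').symm)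

lemma List.exists_eq_cons_append_singleton {α : Type*} {l : List α} (hl : 2 ≤ l.length) :
    ∃ u m v, l = u :: (m ++ [v]) := by
  obtain _ | ⟨u, t⟩ := l
  · simp at hl
  obtain rfl | ⟨m, v, rfl⟩ := t.eq_nil_or_concat
  · simp at hl
  exact ⟨u, m, v, by simp⟩

lemma oplus_cons_append_singleton (u v u' v' : R) (m m' : List R) :
    oplus (u :: (m ++ [v])) (u' :: (m' ++ [v'])) = (u + v') :: (m ++ (v + u') :: m') := by
  have hlast : ∀ (x y : R) (l : List R), (x :: (l ++ [y])).getLast? = some y := fun x y l => by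
    rw [← List.cons_append, List.getLast?_concat]
  simp [oplus, hlast]

end

theorem stmt6_general {R : Type*} [CommRing R] (lam : R)
    (a b : List R) (hk : 2 < a.length) (hl : b.length = a.length)
    (hqa : IsQC lam a) (hqb : IsQC lam b)
    (hcomm : oplus a b = oplus b a) :
    a = b := by
  obtain ⟨u, m, v, rfl⟩ := List.exists_eq_cons_append_singleton (l := a) (by omega)
  obtain ⟨u', m', v', rfl⟩ := List.exists_eq_cons_append_singleton (l := b) (by omega)
  rw [oplus_cons_append_singleton, oplus_cons_append_singleton] at hcomm
  have hm : m = m' := (List.append_inj (List.cons.inj hcomm).2 (by simpa using hl.symm)).1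
  subst hm
  obtain ⟨rfl, rfl⟩ := hqa.eq_and_eq_of_cons_append hqb
  rfl

/-- If `a` and `b` are `λ`-quiddity cycles of the same length `k > 2` (same `λ ∈ {±1}`)
and `a ⊕ b = b ⊕ a` as tuples, then `a = b`. -/
theorem stmt6 {R : Type*} [CommRing R] (lam : R) (h : lam = 1 ∨ lam = -1)
    (a b : List R) (hk : 2 < a.length) (hl : b.length = a.length)
    (hqa : IsQC lam a) (hqb : IsQC lam b)
    (hcomm : oplus a b = oplus b a) :
    a = b :=
  stmt6_general lam a b hk hl hqa hqb hcomm
end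

section
/- Let m > 2 and suppose c = (1,1,…,1) ∈ ℤ^m (all entries equal to 1) is a λ-quiddity cycle. Then c is irreducible over the positive integers ℕ_{>0}: there do not exist k, l > 2 with k + l − 2 = m, a λ′-quiddity cycle a ∈ (ℕ_{>0})^k, a λ″-quiddity cycle b ∈ (ℕ_{>0})^l with λ = −λ′λ″, and σ ∈ D_m such that c = (a ⊕ b)^σ. -/
open Matrix

theorem DihEquiv.mem_iff {α : Type*} {a b : List α} (h : DihEquiv a b) {x : α} :
    x ∈ a ↔ x ∈ b := by
  obtain ⟨i, rfl | rfl⟩ := h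
  · exact List.mem_rotate
  · rw [List.mem_rotate, List.mem_reverse]

theorem head_add_getLast_mem_oplus {R : Type*} [CommRing R] (a b : List R) :
    a.head?.getD 0 + b.getLast?.getD 0 ∈ oplus a b :=
  List.mem_cons_self

theorem two_le_head_add_getLast {a b : List ℤ} (ha : a ≠ []) (hb : b ≠ [])
    (hapos : ∀ x ∈ a, 0 < x) (hbpos : ∀ x ∈ b, 0 < x) :
    2 ≤ a.head?.getD 0 + b.getLast?.getD 0 := by
  rw [List.head?_eq_some_head ha, List.getLast?_eq_some_getLast hb]
  have hhead := hapos _ (List.head_mem ha)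
  have hlast := hbpos _ (List.getLast_mem hb)
  simp only [Option.getD_some]
  omega

theorem not_dihEquiv_replicate_one_oplus {m : ℕ} {a b : List ℤ} (ha : a ≠ []) (hb : b ≠ [])
    (hapos : ∀ x ∈ a, 0 < x) (hbpos : ∀ x ∈ b, 0 < x) :
    ¬ DihEquiv (List.replicate m (1 : ℤ)) (oplus a b) := fun h => by
  have hone := List.eq_of_mem_replicate (h.mem_iff.2 (head_add_getLast_mem_oplus a b))
  have htwo := two_le_head_add_getLast ha hb hapos hbpos
  omega

theorem stmt10_general (m : ℕ) (lam : ℤ) :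
    ¬ ∃ (lam' lam'' : ℤ) (a b : List ℤ),
        (lam' = 1 ∨ lam' = -1) ∧ (lam'' = 1 ∨ lam'' = -1) ∧
        (∀ x ∈ a, 0 < x) ∧ (∀ x ∈ b, 0 < x) ∧
        IsQC lam' a ∧ IsQC lam'' b ∧
        2 < a.length ∧ 2 < b.length ∧ a.length + b.length - 2 = m ∧
        lam = -(lam' * lam'') ∧
        DihEquiv (List.replicate m (1 : ℤ)) (oplus a b) := by
  rintro ⟨-, -, a, b, -, -, hapos, hbpos, -, -, hka, hkb, -, -, hdih⟩
  exact not_dihEquiv_replicate_one_oplus (List.ne_nil_of_length_pos (by omega))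
    (List.ne_nil_of_length_pos (by omega)) hapos hbpos hdih

/-- If `c = (1,…,1) ∈ ℤ^m` (`m > 2`) is a `λ`-quiddity cycle, then it is irreducible over
`ℕ_{>0}`: there are no quiddity cycles `a`, `b` over the positive integers of lengths
`k, l > 2` with `k + l − 2 = m`, `λ = −λ'λ''`, and `c = (a ⊕ b)^σ` for some `σ ∈ D_m`. -/
theorem stmt10 (m : ℕ) (hm : 2 < m) (lam : ℤ) (hlam : lam = 1 ∨ lam = -1)
    (hqc : IsQC lam (List.replicate m (1 : ℤ))) :
    ¬ ∃ (lam' lam'' : ℤ) (a b : List ℤ),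
        (lam' = 1 ∨ lam' = -1) ∧ (lam'' = 1 ∨ lam'' = -1) ∧
        (∀ x ∈ a, 0 < x) ∧ (∀ x ∈ b, 0 < x) ∧
        IsQC lam' a ∧ IsQC lam'' b ∧
        2 < a.length ∧ 2 < b.length ∧ a.length + b.length - 2 = m ∧
        lam = -(lam' * lam'') ∧
        DihEquiv (List.replicate m (1 : ℤ)) (oplus a b) :=
  stmt10_general m lam
end

section
/- The tuple c = (2,1,1,−1,0) ∈ ℤ^5 is a 1-quiddity cycle over ℤ, and there exist no quiddity cycles a ∈ ℤ^k and b ∈ ℤ^l over ℤ with k, l > 2, k + l − 2 = 5, and b irreducible over ℤ, such that c = a ⊕ b (equality of tuples, with no dihedral action applied). Hence a factorization of the form c = (((a₁ ⊕ a₂) ⊕ a₃) ⊕ …) ⊕ aₙ into irreducible factors without dihedral actions does not always exist. -/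
/-!
Over any commutative ring a `λ`-quiddity cycle of length 3 is `(−λ, −λ, −λ)` with `λ² = 1`.
Since `(2,1,1,−1,0) = a ⊕ b` forces `{|a|, |b|} = {3, 4}`, there are two cases. If `|b| = 3`,
the last entry of `a ⊕ b` is `−λ'' ≠ 0`. If `|a| = 3`, then `a = (1,1,1)` and the equation pins
down `b = (0,−1,0,1) = (−1,−1,−1) ⊕ (1,1,1)`, which is reducible.
-/

open Matrix

/-- `c` (of length `> 2`) is reducible over ℤ as a `lam`-quiddity cycle. -/
def ReducibleZ (lam : ℤ) (c : List ℤ) : Prop :=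
  ∃ (lam' lam'' : ℤ) (a b : List ℤ),
    (lam' = 1 ∨ lam' = -1) ∧ (lam'' = 1 ∨ lam'' = -1) ∧
    IsQC lam' a ∧ IsQC lam'' b ∧
    2 < a.length ∧ 2 < b.length ∧ c.length = a.length + b.length - 2 ∧
    lam = -(lam' * lam'') ∧ DihEquiv c (oplus a b)

theorem isQC_three_iff {R : Type*} [CommRing R] {lam x y z : R} :
    IsQC lam [x, y, z] ↔ lam * lam = 1 ∧ x = -lam ∧ y = -lam ∧ z = -lam := by
  simp only [IsQC, List.map_cons, List.map_nil, List.prod_cons, List.prod_nil, mul_one, qMat,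
    mul_fin_two, one_fin_two, smul_of, smul_cons, smul_empty, smul_eq_mul, ← Matrix.ext_iff,
    Fin.forall_fin_two, of_apply, cons_val', cons_val_zero, cons_val_one, empty_val',
    cons_val_fin_one]
  constructor
  · rintro ⟨⟨h00, h01⟩, h10, h11⟩
    have hz : z = -lam := by linear_combination -h00 + x * h10
    have hy : y = -lam := by linear_combination -h11
    exact ⟨by linear_combination h10 - z * hy + lam * hz,
      by linear_combination -x * h10 + hz - z * h01, hy, hz⟩
  · rintro ⟨h, rfl, rfl, rfl⟩
    exact ⟨⟨by linear_combination -lam * h, by linear_combination -h⟩, by linear_combination h,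
      by ring⟩

theorem oplus_getLast?_three {R : Type*} [CommRing R] (a : List R) (x y z : R) :
    (oplus a [x, y, z]).getLast? = some y := by
  simp [oplus, List.getLast?_cons]

theorem isQC_zero_neg_one_zero_one_iff {R : Type*} [CommRing R] {lam : R} :
    IsQC lam [0, -1, 0, 1] ↔ lam = 1 := by
  simp [IsQC, qMat, one_fin_two, smul_of, eq_comm]

theorem reducibleZ_zero_neg_one_zero_one : ReducibleZ 1 [0, -1, 0, 1] :=
  ⟨1, -1, [-1, -1, -1], [1, 1, 1], .inl rfl, .inr rfl, isQC_three_iff.mpr (by norm_num),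
    isQC_three_iff.mpr (by norm_num), by simp, by simp, rfl, rfl, 0, .inl rfl⟩

theorem oplus_three_four {R : Type*} [CommRing R] (x y z u v w t : R) :
    oplus [x, y, z] [u, v, w, t] = [x + t, y, z + u, v, w] := rfl

theorem eq_zero_neg_one_zero_one_of_oplus_eq {lam : ℤ} {a b : List ℤ} (ha : IsQC lam a)
    (ha3 : a.length = 3) (hb4 : b.length = 4) (h : [2, 1, 1, -1, 0] = oplus a b) :
    b = [0, -1, 0, 1] := by
  obtain ⟨x, y, z, rfl⟩ := List.length_eq_three.mp ha3
  obtain ⟨u, v, w, t, rfl⟩ := List.length_eq_four.mp hb4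
  obtain ⟨-, rfl, rfl, rfl⟩ := isQC_three_iff.mp ha
  simp only [oplus_three_four, List.cons.injEq, and_true] at h
  obtain ⟨h1, hlam, h3, rfl, rfl⟩ := h
  obtain rfl : u = 0 := by omega
  obtain rfl : t = 1 := by omega
  rfl

/-- `c = (2,1,1,−1,0)` is a 1-quiddity cycle over ℤ, and there are no quiddity cycles
`a`, `b` over ℤ with lengths `k, l > 2`, `k + l − 2 = 5`, `b` irreducible over ℤ, and
`c = a ⊕ b` (equality of tuples, no dihedral action). -/
theorem stmt12 :
    IsQC (1 : ℤ) [2, 1, 1, -1, 0] ∧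
    ¬ ∃ (lam' lam'' : ℤ) (a b : List ℤ),
        (lam' = 1 ∨ lam' = -1) ∧ (lam'' = 1 ∨ lam'' = -1) ∧
        IsQC lam' a ∧ IsQC lam'' b ∧
        2 < a.length ∧ 2 < b.length ∧ a.length + b.length - 2 = 5 ∧
        ¬ ReducibleZ lam'' b ∧
        ([2, 1, 1, -1, 0] : List ℤ) = oplus a b := by
  refine ⟨by simp [IsQC, qMat, one_fin_two], ?_⟩
  rintro ⟨lam', lam'', a, b, -, -, hqa, hqb, ha, hb, hlen, hirr, hc⟩
  obtain ⟨ha3, hb4⟩ | ⟨-, hb3⟩ :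
      (a.length = 3 ∧ b.length = 4) ∨ (a.length = 4 ∧ b.length = 3) := by omega
  · obtain rfl := eq_zero_neg_one_zero_one_of_oplus_eq hqa ha3 hb4 hc
    obtain rfl := isQC_zero_neg_one_zero_one_iff.mp hqb
    exact hirr reducibleZ_zero_neg_one_zero_one
  · obtain ⟨x, y, z, rfl⟩ := List.length_eq_three.mp hb3
    have hy : 0 = y := by
      simpa using (congrArg List.getLast? hc).trans (oplus_getLast?_three a x y z)
    obtain ⟨hlam, -, rfl, -⟩ := isQC_three_iff.mp hqb
    obtain rfl : lam'' = 0 := neg_eq_zero.mp hy.symm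
    simp at hlam
end

section
/- The tuple c = (4,0,−3,−1,0,2,1) ∈ ℤ^7 is a (−1)-quiddity cycle over ℤ, and it admits two decompositions into irreducible factors with different numbers of factors: there exist quiddity cycles a₁, a₂, a₃ over ℤ, each of length > 2 and irreducible over ℤ, with c ∼ a₁ ⊕ (a₂ ⊕ a₃), and there also exist quiddity cycles b₁, b₂, b₃, b₄ over ℤ, each of length > 2 and irreducible over ℤ, with c ∼ ((b₁ ⊕ b₂) ⊕ b₃) ⊕ b₄. Hence the decomposition of a quiddity cycle into irreducible factors is not unique, and even the number of irreducible factors may vary. -/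
open Matrix

/-- `c` is an irreducible quiddity cycle over ℤ. -/
def IrreducibleZ (c : List ℤ) : Prop :=
  ∃ lam : ℤ, (lam = 1 ∨ lam = -1) ∧ IsQC lam c ∧ 2 < c.length ∧ ¬ ReducibleZ lam c

/-- Classification of length-3 quiddity cycles over ℤ. -/
lemma len3_class (lam : ℤ) (a : List ℤ) (h3 : a.length = 3) (hl : lam = 1 ∨ lam = -1)
    (h : IsQC lam a) :
    (lam = -1 ∧ a = [1, 1, 1]) ∨ (lam = 1 ∧ a = [-1, -1, -1]) := by
  obtain ⟨x, y, z, rfl⟩ := List.length_eq_three.mp h3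
  simp only [IsQC, qMat, List.map, List.prod_cons, List.prod_nil, mul_one,
    Matrix.mul_fin_two] at h
  rw [← Matrix.ext_iff] at h
  simp only [Fin.forall_fin_two, Matrix.smul_apply, Matrix.one_apply, Matrix.cons_val',
    Matrix.cons_val_zero, Matrix.cons_val_one, Matrix.head_cons, Matrix.head_fin_const,
    Matrix.of_apply, Matrix.empty_val', Matrix.cons_val_fin_one] at h
  norm_num at h
  obtain ⟨⟨h1, h2⟩, h3, h4⟩ := h
  rcases hl with rfl | rfl
  · right
    have hy : y = -1 := by linarith
    subst hy
    have hx : x = -1 := by nlinarith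
    have hz : z = -1 := by nlinarith
    simp [hx, hz]
  · left
    have hy : y = 1 := by linarith
    subst hy
    have hx : x = 1 := by nlinarith
    have hz : z = 1 := by nlinarith
    simp [hx, hz]

/-- Membership is preserved under dihedral moves. -/
lemma mem_of_dih (x : ℤ) (c e : List ℤ) (i : ℕ)
    (hd : c = e.rotate i ∨ c = e.reverse.rotate i) (hx : x ∈ c) : x ∈ e := by
  rcases hd with rfl | rfl
  · rwa [List.mem_rotate] at hx
  · rw [List.mem_rotate, List.mem_reverse] at hx
    exact hx

/-- Any quiddity cycle of length 3 is irreducible (no decomposition by lengths). -/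
lemma irr3 (lam : ℤ) (c : List ℤ) (hl : lam = 1 ∨ lam = -1) (h : IsQC lam c)
    (h3 : c.length = 3) : IrreducibleZ c := by
  refine ⟨lam, hl, h, by omega, ?_⟩
  rintro ⟨l', l'', a, b, -, -, -, -, ha, hb, hlen, -, -⟩
  omega

/-- A length-4 `1`-quiddity cycle containing an entry other than `0, 1, -1`
is irreducible. -/
lemma irr4 (c : List ℤ) (h : IsQC 1 c) (h4 : c.length = 4) (x : ℤ) (hx : x ∈ c)
    (hx0 : x ≠ 0) (hx1 : x ≠ 1) (hx2 : x ≠ -1) : IrreducibleZ c := by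
  refine ⟨1, Or.inl rfl, h, by omega, ?_⟩
  rintro ⟨l', l'', a, b, hl', hl'', ha, hb, ha2, hb2, hlen, hlam, i, hd⟩
  have hal : a.length = 3 := by omega
  have hbl : b.length = 3 := by omega
  rcases len3_class l' a hal hl' ha with ⟨rfl, rfl⟩ | ⟨rfl, rfl⟩ <;>
    rcases len3_class l'' b hbl hl'' hb with ⟨rfl, rfl⟩ | ⟨rfl, rfl⟩
  · norm_num at hlam
  · have hm := mem_of_dih x c (oplus [1, 1, 1] [-1, -1, -1]) i hd hx
    rw [show oplus [1, 1, 1] ([-1, -1, -1] : List ℤ) = [0, 1, 0, -1] from rfl] at hm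
    simp at hm
    omega
  · have hm := mem_of_dih x c (oplus [-1, -1, -1] [1, 1, 1]) i hd hx
    rw [show oplus [-1, -1, -1] ([1, 1, 1] : List ℤ) = [0, -1, 0, 1] from rfl] at hm
    simp at hm
    omega
  · norm_num at hlam

lemma qc_c : IsQC (-1 : ℤ) [4, 0, -3, -1, 0, 2, 1] := by unfold IsQC qMat; decide
lemma qc_111 : IsQC (-1 : ℤ) [1, 1, 1] := by unfold IsQC qMat; decide
lemma qc_m111 : IsQC (1 : ℤ) [-1, -1, -1] := by unfold IsQC qMat; decide
lemma qc_a1 : IsQC (1 : ℤ) [-4, 0, 4, 0] := by unfold IsQC qMat; decide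
lemma qc_a2 : IsQC (1 : ℤ) [0, 2, 0, -2] := by unfold IsQC qMat; decide
lemma qc_b4 : IsQC (1 : ℤ) [0, -3, 0, 3] := by unfold IsQC qMat; decide

/-- `c = (4,0,−3,−1,0,2,1)` is a `(−1)`-quiddity cycle over ℤ admitting decompositions
into irreducible factors with three factors, `c ∼ a₁ ⊕ (a₂ ⊕ a₃)`, and with four factors,
`c ∼ ((b₁ ⊕ b₂) ⊕ b₃) ⊕ b₄`. Hence the decomposition into irreducible factors is not
unique, and even the number of factors may vary. -/
theorem stmt14 :
    IsQC (-1 : ℤ) [4, 0, -3, -1, 0, 2, 1] ∧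
    (∃ a₁ a₂ a₃ : List ℤ, IrreducibleZ a₁ ∧ IrreducibleZ a₂ ∧ IrreducibleZ a₃ ∧
      DihEquiv ([4, 0, -3, -1, 0, 2, 1] : List ℤ) (oplus a₁ (oplus a₂ a₃))) ∧
    (∃ b₁ b₂ b₃ b₄ : List ℤ, IrreducibleZ b₁ ∧ IrreducibleZ b₂ ∧ IrreducibleZ b₃ ∧
      IrreducibleZ b₄ ∧
      DihEquiv ([4, 0, -3, -1, 0, 2, 1] : List ℤ) (oplus (oplus (oplus b₁ b₂) b₃) b₄)) := by
  refine ⟨qc_c, ⟨[-4, 0, 4, 0], [0, 2, 0, -2], [1, 1, 1], ?_, ?_, ?_, ⟨4, Or.inr (by decide)⟩⟩,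
    ⟨[1, 1, 1], [1, 1, 1], [-1, -1, -1], [0, -3, 0, 3], ?_, ?_, ?_, ?_,
      ⟨6, Or.inr (by decide)⟩⟩⟩
  · exact irr4 _ qc_a1 rfl 4 (by decide) (by decide) (by decide) (by decide)
  · exact irr4 _ qc_a2 rfl 2 (by decide) (by decide) (by decide) (by decide)
  · exact irr3 _ _ (Or.inr rfl) qc_111 rfl
  · exact irr3 _ _ (Or.inr rfl) qc_111 rfl
  · exact irr3 _ _ (Or.inr rfl) qc_111 rfl
  · exact irr3 _ _ (Or.inl rfl) qc_m111 rfl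
  · exact irr4 _ qc_b4 rfl 3 (by decide) (by decide) (by decide) (by decide)
end

section
/- Over R = ℂ, a 4-tuple (c₁, c₂, c₃, c₄) ∈ ℂ⁴ is a λ-quiddity cycle for some λ ∈ {±1} if and only if it is of the form (t, 2/t, t, 2/t) for some t ∈ ℂ with t ≠ 0, or of the form (a, 0, −a, 0) or (0, a, 0, −a) for some a ∈ ℂ. -/
open Matrix

theorem isQC_four (lam c₁ c₂ c₃ c₄ : ℂ) : IsQC lam [c₁, c₂, c₃, c₄] ↔
    ((c₁*c₂-1)*(c₃*c₄-1) - c₁*c₄ = lam ∧ c₁ - (c₁*c₂-1)*c₃ = 0 ∧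
     c₂*(c₃*c₄-1) - c₄ = 0 ∧ 1 - c₂*c₃ = lam) := by
  rw [IsQC, ← Matrix.ext_iff]
  simp only [List.map, List.prod_cons, List.prod_nil, mul_one, qMat, Fin.forall_fin_two,
    Matrix.mul_apply, Fin.sum_univ_two, Matrix.smul_apply, Matrix.one_apply, smul_eq_mul,
    Matrix.cons_val', Matrix.cons_val_zero, Matrix.cons_val_one, Matrix.head_cons,
    Matrix.head_fin_const, Matrix.empty_val', Matrix.cons_val_fin_one, Matrix.of_apply,
    reduceIte, Fin.zero_eq_one_iff, Fin.one_eq_zero_iff, Nat.reduceEqDiff, mul_zero]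
  constructor
  · rintro ⟨⟨h1,h2⟩,h3,h4⟩
    exact ⟨by linear_combination h1, by linear_combination h2, by linear_combination h3,
      by linear_combination h4⟩
  · rintro ⟨h1,h2,h3,h4⟩
    exact ⟨⟨by linear_combination h1, by linear_combination h2⟩, by linear_combination h3,
      by linear_combination h4⟩


/-- Over ℂ, `(c₁,c₂,c₃,c₄)` is a `λ`-quiddity cycle for some `λ ∈ {±1}` iff it is of the
form `(t, 2/t, t, 2/t)` with `t ≠ 0`, or `(a, 0, −a, 0)` or `(0, a, 0, −a)` with `a ∈ ℂ`. -/
theorem stmt18 (c₁ c₂ c₃ c₄ : ℂ) :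
    (∃ lam : ℂ, (lam = 1 ∨ lam = -1) ∧ IsQC lam [c₁, c₂, c₃, c₄]) ↔
      ((∃ t : ℂ, t ≠ 0 ∧ c₁ = t ∧ c₂ = 2 / t ∧ c₃ = t ∧ c₄ = 2 / t) ∨
       (∃ a : ℂ, (c₁ = a ∧ c₂ = 0 ∧ c₃ = -a ∧ c₄ = 0) ∨
                 (c₁ = 0 ∧ c₂ = a ∧ c₃ = 0 ∧ c₄ = -a))) := by
  constructor
  · rintro ⟨lam, hlam, hqc⟩
    rw [isQC_four] at hqc
    obtain ⟨h1, h2, h3, h4⟩ := hqc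
    rcases hlam with rfl | rfl
    · -- lam = 1 : c₂c₃ = 0
      have h23 : c₂ * c₃ = 0 := by linear_combination -h4
      have h31 : c₃ = -c₁ := by linear_combination h2 + c₁ * h23
      have h42 : c₄ = -c₂ := by linear_combination c₄ * h23 - h3
      have h12 : c₁ * c₂ = 0 := by linear_combination c₂ * h31 - h23
      rcases mul_eq_zero.mp h12 with h | h
      · exact Or.inr ⟨c₂, Or.inr ⟨h, rfl, by rw [h31, h, neg_zero], h42⟩⟩
      · exact Or.inr ⟨c₁, Or.inl ⟨rfl, h, by rw [h31], by rw [h42, h, neg_zero]⟩⟩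
    · -- lam = -1 : c₂c₃ = 2
      have h23 : c₂ * c₃ = 2 := by linear_combination -h4
      have h31 : c₃ = c₁ := by linear_combination h2 + c₁ * h23
      have h42 : c₄ = c₂ := by linear_combination h3 - c₄ * h23
      have h12 : c₁ * c₂ = 2 := by linear_combination h23 - c₂ * h31
      have ht : c₁ ≠ 0 := by
        rintro rfl; simp at h12
      refine Or.inl ⟨c₁, ht, rfl, ?_, h31, ?_⟩
      all_goals field_simp
      all_goals first
        | linear_combination h12
        | linear_combination 2 * c₁ * h42
        | linear_combination h12 - c₁ * h42
        | linear_combination c₁ * h42 + h12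
  · rintro (⟨t, ht, rfl, rfl, rfl, rfl⟩ | ⟨a, ⟨rfl, rfl, rfl, rfl⟩ | ⟨rfl, rfl, rfl, rfl⟩⟩)
    · refine ⟨-1, Or.inr rfl, (isQC_four _ _ _ _ _).mpr ⟨?_, ?_, ?_, ?_⟩⟩ <;>
        field_simp <;> ring
    · exact ⟨1, Or.inl rfl, (isQC_four _ _ _ _ _).mpr ⟨by ring, by ring, by ring, by ring⟩⟩
    · exact ⟨1, Or.inl rfl, (isQC_four _ _ _ _ _).mpr ⟨by ring, by ring, by ring, by ring⟩⟩
end
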